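/- Let t, x, y lie in the region 0 < t ≤ 1/2, 0 ≤ y ≤ 1, x ≥ 200, and set s_* := (1+y−ix)/2 + (t/2)·α((1+y−ix)/2) and κ := (t/2)·(α((1−y+ix)/2) − α((1+y+ix)/2)). Then Re s_* ≥ (1+y)/2 + (t/4)·log(x/(4π)) − (t/(2x²))·max(1 − 3y + 4y(1+y)/x², 0), and |κ| ≤ t·y/(2(x−6)). -/

import Mathlib

open Complex

/-- The logarithmic derivative `α` of `M₀`. -/
noncomputable def alph (s : ℂ) : ℂ :=
  1 / (2 * s) + 1 / (s - 1) + (1 / 2) * Complex.log (s / (2 * Real.pi))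

lemma alph_hasDerivAt (z : ℂ) (hz : 0 < z.im) :
    HasDerivAt alph (-1/(2*z^2) - 1/((z-1)^2) + 1/(2*z)) z := by
  have hz0 : z ≠ 0 := by intro h; rw [h] at hz; simp at hz
  have hz1 : z - 1 ≠ 0 := by
    intro h
    have : (z - 1).im = 0 := by rw [h]; simp
    simp at this
    rw [this] at hz; simp at hz
  have hpic : ((2:ℂ) * (Real.pi : ℂ)) = ((2 * Real.pi : ℝ) : ℂ) := by push_cast; ring
  have hpi : (2 * (Real.pi : ℂ)) ≠ 0 := by
    rw [hpic]
    simp [Complex.ofReal_ne_zero]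
  have hslit : z / (2 * (Real.pi : ℂ)) ∈ Complex.slitPlane := by
    rw [Complex.mem_slitPlane_iff]
    right
    rw [hpic, Complex.div_ofReal_im]
    positivity
  have h2z : (2 : ℂ) * z ≠ 0 := by simp [hz0]
  have h1 : HasDerivAt (fun w : ℂ => 1 / (2 * w)) ((0 * (2*z) - 1 * 2) / (2*z)^2) z := by
    simpa [Pi.div_def] using (hasDerivAt_const z (1:ℂ)).div ((hasDerivAt_id z).const_mul 2) h2z
  have h2 : HasDerivAt (fun w : ℂ => 1 / (w - 1)) ((0 * (z-1) - 1 * 1) / (z-1)^2) z := by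
    simpa [Pi.div_def] using (hasDerivAt_const z (1:ℂ)).div ((hasDerivAt_id z).sub_const 1) hz1
  have h3 : HasDerivAt (fun w : ℂ => Complex.log (w / (2 * Real.pi)))
      ((1 / (2 * (Real.pi:ℂ))) / (z / (2 * Real.pi))) z := by
    have := ((hasDerivAt_id z).div_const (2 * (Real.pi:ℂ))).clog hslit
    simpa [one_div] using this
  have h3' := h3.const_mul ((1:ℂ)/2)
  have hmain := (h1.add h2).add h3'
  have hzpi : z / (2 * (Real.pi:ℂ)) ≠ 0 := div_ne_zero hz0 hpi
  refine hmain.congr_deriv ?_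
  rw [div_div_eq_mul_div, one_div_mul_cancel hpi]
  field_simp [hz0, hz1]
  ring

lemma deriv_bound (x : ℝ) (hx : 200 ≤ x) (z : ℂ) (him : z.im = x/2) :
    ‖(-1/(2*z^2) - 1/((z-1)^2) + 1/(2*z))‖ ≤ (x+6)/x^2 := by
  have hx0 : (0:ℝ) < x := by linarith
  have habs : x/2 ≤ ‖z‖ := by
    calc x/2 = |z.im| := by rw [him, _root_.abs_of_nonneg (by positivity)]
    _ ≤ ‖z‖ := Complex.abs_im_le_norm z
  have habs1 : x/2 ≤ ‖(z-1)‖ := by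
    have h1 : (z-1).im = x/2 := by simp [him]
    calc x/2 = |(z-1).im| := by rw [h1, _root_.abs_of_nonneg (by positivity)]
    _ ≤ ‖(z-1)‖ := Complex.abs_im_le_norm _
  have hA : (0:ℝ) < ‖z‖ := lt_of_lt_of_le (by positivity) habs
  have hB : (0:ℝ) < ‖(z-1)‖ := lt_of_lt_of_le (by positivity) habs1
  calc ‖(-1/(2*z^2) - 1/((z-1)^2) + 1/(2*z))‖
      ≤ ‖(-1/(2*z^2) - 1/((z-1)^2))‖ + ‖(1/(2*z))‖ := norm_add_le _ _
    _ ≤ ‖(-1/(2*z^2))‖ + ‖(1/((z-1)^2))‖ + ‖(1/(2*z))‖ := by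
        have := norm_sub_le (-1/(2*z^2)) (1/((z-1)^2))
        linarith
    _ = 1/(2*(‖z‖)^2) + 1/((‖(z-1)‖)^2) + 1/(2*‖z‖) := by
        simp [norm_div, norm_mul, norm_pow]
    _ ≤ 1/(2*(x/2)^2) + 1/((x/2)^2) + 1/(2*(x/2)) := by
        gcongr <;> positivity
    _ = (x+6)/x^2 := by field_simp; ring

lemma kappa_main (x y : ℝ) (hy : 0 ≤ y) (hx : 200 ≤ x) :
    ‖(alph ((1 - (y : ℂ) + (x : ℂ) * Complex.I) / 2) -
        alph ((1 + (y : ℂ) + (x : ℂ) * Complex.I) / 2))‖ ≤ y / (x - 6) := by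
  have hx0 : (0:ℝ) < x := by linarith
  set s₁ : ℂ := (1 - (y : ℂ) + (x : ℂ) * Complex.I) / 2 with hs₁
  set s₂ : ℂ := (1 + (y : ℂ) + (x : ℂ) * Complex.I) / 2 with hs₂
  have him1 : s₁.im = x/2 := by simp [hs₁]
  have him2 : s₂.im = x/2 := by simp [hs₂]
  have hseg : ∀ z ∈ segment ℝ s₁ s₂, z.im = x/2 := by
    intro z hz
    obtain ⟨a, b, ha, hb, hab, rfl⟩ := hz
    simp [Complex.add_im, Complex.smul_im, him1, him2]
    nlinarith [hab]
  have hderiv : ∀ z ∈ segment ℝ s₁ s₂,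
      HasDerivWithinAt alph (-1/(2*z^2) - 1/((z-1)^2) + 1/(2*z)) (segment ℝ s₁ s₂) z := by
    intro z hz
    exact (alph_hasDerivAt z (by rw [hseg z hz]; positivity)).hasDerivWithinAt
  have hbound : ∀ z ∈ segment ℝ s₁ s₂,
      ‖-1/(2*z^2) - 1/((z-1)^2) + 1/(2*z)‖ ≤ (x+6)/x^2 :=
    fun z hz => deriv_bound x hx z (hseg z hz)
  have := (convex_segment s₁ s₂).norm_image_sub_le_of_norm_hasDerivWithin_le hderiv hbound
      (right_mem_segment ℝ s₁ s₂) (left_mem_segment ℝ s₁ s₂)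
  have hdiff : s₁ - s₂ = (-y : ℝ) := by
    rw [hs₁, hs₂]; push_cast; ring
  have hnorm : ‖s₁ - s₂‖ = y := by
    rw [hdiff, Complex.norm_real, Real.norm_eq_abs, abs_neg, _root_.abs_of_nonneg hy]
  rw [hnorm] at this
  calc ‖(alph s₁ - alph s₂)‖ ≤ (x+6)/x^2 * y := this
    _ ≤ y / (x-6) := by
        rw [div_mul_eq_mul_div, div_le_div_iff₀ (by positivity) (by linarith)]
        nlinarith

lemma key_ineq (x y : ℝ) (hy : 0 ≤ y) (hx : 200 ≤ x) :
    2*(1-y)/((1-y)^2+x^2) - (1+y)/((1+y)^2+x^2) ≤ max (1-3*y+4*y*(1+y)/x^2) 0 / x^2 := by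
  have hx0 : (0:ℝ) < x := by linarith
  have hx2 : (0:ℝ) < x^2 := by positivity
  have hd1 : (0:ℝ) < (1-y)^2+x^2 := by positivity
  have hd2 : (0:ℝ) < (1+y)^2+x^2 := by positivity
  rcases le_or_gt 0 (1-3*y+4*y*(1+y)/x^2) with h | h
  · rw [max_eq_left h]
    have h' : 0 ≤ (1-3*y)*x^2 + 4*y*(1+y) := by
      have := mul_nonneg h hx2.le
      field_simp at this
      nlinarith [this]
    have hr : (1-3*y+4*y*(1+y)/x^2) / x^2 = ((1-3*y)*x^2 + 4*y*(1+y)) / x^4 := by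
      rw [div_eq_div_iff (by positivity : (x:ℝ)^2 ≠ 0) (by positivity : (x:ℝ)^4 ≠ 0)]
      field_simp
    rw [hr, div_sub_div _ _ hd1.ne' hd2.ne', div_le_div_iff₀ (by positivity) (by positivity)]
    nlinarith [mul_nonneg h' (mul_nonneg (sq_nonneg (1-y)) hx2.le),
      mul_nonneg h' (sq_nonneg (1-y^2)),
      mul_nonneg (mul_nonneg hy (pow_nonneg (by linarith : (0:ℝ) ≤ 1+y) 3)) hx2.le]
  · rw [max_eq_right h.le]
    rw [zero_div, sub_nonpos, div_le_div_iff₀ hd1 hd2]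
    have h'' : (1-3*y)*x^2 + 4*y*(1+y) < 0 := by
      have := mul_neg_of_neg_of_pos h hx2
      field_simp at this
      nlinarith [this]
    have h3 : 1 - 3*y < 0 := by nlinarith [mul_nonneg hy (by linarith : (0:ℝ) ≤ 1+y)]
    have hq : (1+y)^2*(1-3*y) ≤ 0 :=
      mul_nonpos_of_nonneg_of_nonpos (sq_nonneg _) h3.le
    nlinarith [h'', hq]

lemma re_alph (x y : ℝ) (hy : 0 ≤ y) (hx : 200 ≤ x) :
    (alph ((1 + (y : ℂ) - (x : ℂ) * Complex.I) / 2)).re =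
      (1+y)/((1+y)^2+x^2) + 2*(y-1)/((1-y)^2+x^2)
        + (1/2) * Real.log (‖((1 + (y : ℂ) - (x : ℂ) * Complex.I) / 2)‖ / (2*Real.pi)) := by
  have hx0 : (0:ℝ) < x := by linarith
  set s : ℂ := (1 + (y : ℂ) - (x : ℂ) * Complex.I) / 2 with hs
  have hre : s.re = (1+y)/2 := by simp [hs]
  have him : s.im = -(x/2) := by simp [hs]; ring
  have h1 : (1/(2*s)).re = (1+y)/((1+y)^2+x^2) := by
    rw [one_div, Complex.inv_re, Complex.normSq_apply]
    simp [Complex.mul_re, Complex.mul_im, hre, him]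
    rw [div_eq_div_iff (by positivity) (by positivity)]
    ring
  have h2 : (1/(s-1)).re = 2*(y-1)/((1-y)^2+x^2) := by
    rw [one_div, Complex.inv_re, Complex.normSq_apply]
    simp [Complex.sub_re, Complex.sub_im, hre, him]
    rw [div_eq_div_iff (by nlinarith [sq_nonneg ((1+y)/2-1)] : (0:ℝ) < ((1+y)/2-1)*((1+y)/2-1) + x/2*(x/2)).ne' (by positivity : (0:ℝ) < (1-y)^2+x^2).ne']
    ring
  have h3 : (((1:ℂ)/2) * Complex.log (s / (2*Real.pi))).re
      = (1/2) * Real.log (‖s‖ / (2*Real.pi)) := by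
    rw [Complex.mul_re]
    simp [Complex.log_re]
    rw [_root_.abs_of_nonneg Real.pi_pos.le]
  rw [alph, Complex.add_re, Complex.add_re, h1, h2, h3]

/-- Bounds on `Re s_*` and `|κ|` (Proposition 7.1(ii),(iii)). -/
theorem sstar_re_and_kappa_bounds (t x y : ℝ)
    (ht : 0 < t) (ht' : t ≤ 1 / 2) (hy : 0 ≤ y) (hy' : y ≤ 1) (hx : 200 ≤ x) :
    (1 + y) / 2 + (t / 4) * Real.log (x / (4 * Real.pi)) -
        (t / (2 * x ^ 2)) * max (1 - 3 * y + 4 * y * (1 + y) / x ^ 2) 0 ≤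
      (((1 + (y : ℂ) - (x : ℂ) * Complex.I) / 2 +
        (t / 2 : ℂ) * alph ((1 + (y : ℂ) - (x : ℂ) * Complex.I) / 2)).re) ∧
    ‖((t / 2 : ℂ) * (alph ((1 - (y : ℂ) + (x : ℂ) * Complex.I) / 2) -
        alph ((1 + (y : ℂ) + (x : ℂ) * Complex.I) / 2)))‖ ≤
      t * y / (2 * (x - 6)) := by
  have hx0 : (0:ℝ) < x := by linarith
  have hx2 : (0:ℝ) < x^2 := by positivity
  constructor
  · -- real part bound
    set s : ℂ := (1 + (y : ℂ) - (x : ℂ) * Complex.I) / 2 with hs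
    have hre : s.re = (1+y)/2 := by simp [hs]
    have him : s.im = -(x/2) := by simp [hs]; ring
    have hmulre : ((t / 2 : ℂ) * alph s).re = (t/2) * (alph s).re := by
      rw [Complex.mul_re]
      simp
    have habs : x/2 ≤ ‖s‖ := by
      calc x/2 = |s.im| := by rw [him]; rw [abs_neg, _root_.abs_of_nonneg (by positivity)]
      _ ≤ ‖s‖ := Complex.abs_im_le_norm s
    have hlog : Real.log (x / (4 * Real.pi)) ≤ Real.log (‖s‖ / (2*Real.pi)) := by
      apply Real.log_le_log (by positivity)
      rw [div_le_div_iff₀ (by positivity) (by positivity)]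
      nlinarith [Real.pi_pos, habs]
    have hkey := key_ineq x y hy hx
    have hT : -(max (1-3*y+4*y*(1+y)/x^2) 0 / x^2) ≤
        (1+y)/((1+y)^2+x^2) + 2*(y-1)/((1-y)^2+x^2) := by
      have : 2*(y-1)/((1-y)^2+x^2) = -(2*(1-y)/((1-y)^2+x^2)) := by ring
      rw [this]
      linarith [hkey]
    rw [Complex.add_re, hmulre, hre, re_alph x y hy hx]
    have e1 : (t/2) * (-(max (1-3*y+4*y*(1+y)/x^2) 0 / x^2)) ≤
        (t/2) * ((1+y)/((1+y)^2+x^2) + 2*(y-1)/((1-y)^2+x^2)) :=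
      mul_le_mul_of_nonneg_left hT (by positivity)
    have e2 : (t/2) * ((1/2) * Real.log (x / (4 * Real.pi))) ≤
        (t/2) * ((1/2) * Real.log (‖s‖ / (2*Real.pi))) := by
      apply mul_le_mul_of_nonneg_left _ (by positivity)
      linarith
    have e3 : (t / (2 * x ^ 2)) * max (1 - 3 * y + 4 * y * (1 + y) / x ^ 2) 0
        = -((t/2) * (-(max (1-3*y+4*y*(1+y)/x^2) 0 / x^2))) := by
      field_simp
    nlinarith [e1, e2, e3]
  · -- kappa bound
    have h := kappa_main x y hy hx
    rw [norm_mul]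
    have habs : ‖((t:ℂ)/2)‖ = t/2 := by
      rw [show ((t:ℂ)/2) = ((t/2 : ℝ) : ℂ) by push_cast; ring, Complex.norm_real, Real.norm_eq_abs,
        _root_.abs_of_nonneg (by positivity)]
    rw [habs]
    calc (t/2) * ‖(alph ((1 - (y : ℂ) + (x : ℂ) * Complex.I) / 2) -
            alph ((1 + (y : ℂ) + (x : ℂ) * Complex.I) / 2))‖
        ≤ (t/2) * (y / (x-6)) := mul_le_mul_of_nonneg_left h (by positivity)
      _ = t * y / (2 * (x - 6)) := by
          field_simp
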